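/- Under the case assumptions π(C) ≤ δ π(A) and π(B_{ε₁}) ≥ ε₂ π(A_{k/4}), where A_{k/4} := {y ∈ A : p(y, Aᶜ) ≥ k/4}, C := A \ A_{k/4}, and B_{ε₁} := {x ∈ A_{k/4} : p(x, Aᶜ) < 1 − ε₁}, one has k_2(A) ≥ (k/4)(ε₁ ε₂ (1 − δ) − δ). -/

import Mathlib

open MeasureTheory ProbabilityTheory

/-- The `n`-step transition kernel (`n`-fold composition of `κ`). -/
noncomputable def kpow {Ω : Type*} [MeasurableSpace Ω] (κ : Kernel Ω Ω) : ℕ → Kernel Ω Ω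
  | 0 => Kernel.id
  | n + 1 => (kpow κ n) ∘ₖ κ

/-- The probability flow out of the set `A`: `∫_A p(x, Aᶜ) π(dx)`. -/
noncomputable def flow {Ω : Type*} [MeasurableSpace Ω] (κ : Kernel Ω Ω) (π : Measure Ω)
    (A : Set Ω) : ℝ :=
  (∫⁻ x in A, κ x Aᶜ ∂π).toReal

/-- The isoperimetric quantity `k(A) = (1/(π(A)π(Aᶜ))) ∫_A p(x, Aᶜ) π(dx)`. -/
noncomputable def isoQ {Ω : Type*} [MeasurableSpace Ω] (κ : Kernel Ω Ω) (π : Measure Ω)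
    (A : Set Ω) : ℝ :=
  flow κ π A / ((π A).toReal * (π Aᶜ).toReal)

/-- Reversibility: `π(dx)p(x,dy) = π(dy)p(y,dx)`. -/
def Reversible {Ω : Type*} [MeasurableSpace Ω] (κ : Kernel Ω Ω) (π : Measure Ω) : Prop :=
  ∀ A B : Set Ω, MeasurableSet A → MeasurableSet B →
    ∫⁻ x in A, κ x B ∂π = ∫⁻ x in B, κ x A ∂π

/-- `k_n := inf over A with 0 < π(A) < 1 of k_n(A)`, the `n`-step isoperimetric constant. -/
noncomputable def kinfN {Ω : Type*} [MeasurableSpace Ω] (κ : Kernel Ω Ω) (π : Measure Ω)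
    (n : ℕ) : ℝ :=
  sInf ((fun A => isoQ (kpow κ n) π A) ''
    {A : Set Ω | MeasurableSet A ∧ 0 < π A ∧ π A < 1})

/-- `K := sup over A with 0 < π(A) < 1 of k(A)`. -/
noncomputable def Ksup {Ω : Type*} [MeasurableSpace Ω] (κ : Kernel Ω Ω) (π : Measure Ω) : ℝ :=
  sSup ((fun A => isoQ κ π A) ''
    {A : Set Ω | MeasurableSet A ∧ 0 < π A ∧ π A < 1})

open scoped ENNReal

/-!
A point of `B_{ε₁}` stays in `A` with probability at least `ε₁`. By reversibility the mass that
`B_{ε₁}` sends into `C` is at most `π(C)`, so `B_{ε₁}` sends mass at least `ε₁ π(B_{ε₁}) − π(C)`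
into `A_{k/4}`, from where a second step leaves `A` with probability at least `k/4`. The case
assumptions bound `ε₁ π(B_{ε₁}) − π(C)` below by `(ε₁ε₂(1−δ) − δ) π(A)`, and dividing by
`π(A) π(Aᶜ) ≤ π(A)` gives the bound on `k₂(A)`.
-/

section IsoperimetricFlow

variable {Ω : Type*} [MeasurableSpace Ω]

lemma kpow_two (κ : Kernel Ω Ω) : kpow κ 2 = κ ∘ₖ κ := by
  show Kernel.id ∘ₖ κ ∘ₖ κ = κ ∘ₖ κ
  rw [Kernel.id_comp]

instance isMarkovKernel_kpow (κ : Kernel Ω Ω) [IsMarkovKernel κ] (n : ℕ) :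
    IsMarkovKernel (kpow κ n) := by
  induction n with
  | zero => exact inferInstanceAs (IsMarkovKernel Kernel.id)
  | succ n _ => exact inferInstanceAs (IsMarkovKernel (kpow κ n ∘ₖ κ))

lemma isoQ_nonneg (κ : Kernel Ω Ω) (π : Measure Ω) (A : Set Ω) : 0 ≤ isoQ κ π A :=
  div_nonneg ENNReal.toReal_nonneg (mul_nonneg ENNReal.toReal_nonneg ENNReal.toReal_nonneg)

lemma kinfN_nonneg (κ : Kernel Ω Ω) (π : Measure Ω) (n : ℕ) : 0 ≤ kinfN κ π n :=
  Real.sInf_nonneg <| by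
    rintro _ ⟨A, -, rfl⟩
    exact isoQ_nonneg _ _ _

lemma le_isoQ_of_mul_le_flow {κ : Kernel Ω Ω} {π : Measure Ω} [IsProbabilityMeasure π]
    {A : Set Ω} (hA : MeasurableSet A) (h0 : 0 < π A) (h1 : π A < 1) {a : ℝ}
    (h : a * (π A).toReal ≤ flow κ π A) : a ≤ isoQ κ π A := by
  have hpos : 0 < (π A).toReal := ENNReal.toReal_pos h0.ne' (measure_ne_top π A)
  have hcpos : 0 < (π Aᶜ).toReal := by
    refine ENNReal.toReal_pos (ne_of_gt ?_) (measure_ne_top π Aᶜ)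
    rw [prob_compl_eq_one_sub hA]
    exact tsub_pos_of_lt h1
  have hcle : (π Aᶜ).toReal ≤ 1 := measureReal_le_one
  have hflow : 0 ≤ flow κ π A := ENNReal.toReal_nonneg
  rw [isoQ, le_div_iff₀ (mul_pos hpos hcpos)]
  -- `a π(A) π(Aᶜ) - flow = (a π(A) - flow) π(Aᶜ) - flow (1 - π(Aᶜ))`
  nlinarith [mul_le_mul_of_nonneg_right (sub_nonpos.mpr h) hcpos.le]

lemma setLIntegral_kernel_le_measure {κ : Kernel Ω Ω} [IsZeroOrMarkovKernel κ]
    (π : Measure Ω) (A S : Set Ω) :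
    ∫⁻ x in A, κ x S ∂π ≤ π A :=
  (lintegral_mono fun _ => prob_le_one).trans_eq (setLIntegral_one A)

section TwoStepFlow

variable {κ : Kernel Ω Ω} {π : Measure Ω} {A A' B S : Set Ω}

lemma Reversible.setLIntegral_le_measure [IsZeroOrMarkovKernel κ] (hrev : Reversible κ π)
    {C : Set Ω} (hB : MeasurableSet B) (hC : MeasurableSet C) :
    ∫⁻ x in B, κ x C ∂π ≤ π C :=
  (hrev B C hB hC).trans_le (setLIntegral_kernel_le_measure π C B)

lemma mul_le_kpow_two_apply {c : ℝ≥0∞} (hS : MeasurableSet S) (hA' : MeasurableSet A')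
    (hc : ∀ y ∈ A', c ≤ κ y S) (x : Ω) : c * κ x A' ≤ kpow κ 2 x S := by
  rw [kpow_two, Kernel.comp_apply' _ _ _ hS]
  calc c * κ x A' = ∫⁻ _ in A', c ∂(κ x) := (setLIntegral_const A' c).symm
    _ ≤ ∫⁻ y in A', κ y S ∂(κ x) := setLIntegral_mono' hA' hc
    _ ≤ ∫⁻ y, κ y S ∂(κ x) := setLIntegral_le_lintegral _ _

lemma mul_measure_le_setLIntegral_add [IsZeroOrMarkovKernel κ] (hrev : Reversible κ π)
    {ε : ℝ≥0∞} (hA : MeasurableSet A) (hA' : MeasurableSet A') (hB : MeasurableSet B)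
    (hε : ∀ x ∈ B, ε ≤ κ x A) :
    ε * π B ≤ ∫⁻ x in B, κ x A' ∂π + π (A \ A') := by
  calc ε * π B = ∫⁻ _ in B, ε ∂π := (setLIntegral_const B ε).symm
    _ ≤ ∫⁻ x in B, κ x A ∂π := setLIntegral_mono' hB hε
    _ ≤ ∫⁻ x in B, (κ x A' + κ x (A \ A')) ∂π := lintegral_mono fun x =>
        (measure_mono (Set.subset_sdiff_union A A')).trans
          ((measure_union_le _ _).trans_eq (add_comm _ _))
    _ = ∫⁻ x in B, κ x A' ∂π + ∫⁻ x in B, κ x (A \ A') ∂π :=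
        lintegral_add_right _ (κ.measurable_coe (hA.diff hA'))
    _ ≤ ∫⁻ x in B, κ x A' ∂π + π (A \ A') :=
        add_le_add_right (hrev.setLIntegral_le_measure hB (hA.diff hA')) _

lemma mul_tsub_le_setLIntegral_kpow_two [IsZeroOrMarkovKernel κ] (hrev : Reversible κ π)
    {c ε : ℝ≥0∞} (hA : MeasurableSet A) (hA' : MeasurableSet A') (hB : MeasurableSet B)
    (hBA : B ⊆ A) (hc : ∀ y ∈ A', c ≤ κ y Aᶜ) (hε : ∀ x ∈ B, ε ≤ κ x A) :
    c * (ε * π B - π (A \ A')) ≤ ∫⁻ x in A, kpow κ 2 x Aᶜ ∂π :=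
  calc c * (ε * π B - π (A \ A')) ≤ c * ∫⁻ x in B, κ x A' ∂π := by
        gcongr
        exact tsub_le_iff_right.mpr (mul_measure_le_setLIntegral_add hrev hA hA' hB hε)
    _ = ∫⁻ x in B, c * κ x A' ∂π := (lintegral_const_mul c (κ.measurable_coe hA')).symm
    _ ≤ ∫⁻ x in B, kpow κ 2 x Aᶜ ∂π :=
        lintegral_mono (mul_le_kpow_two_apply hA.compl hA' hc)
    _ ≤ ∫⁻ x in A, kpow κ 2 x Aᶜ ∂π := lintegral_mono_set hBA

lemma mul_sub_le_flow_kpow_two [IsMarkovKernel κ] [IsFiniteMeasure π] (hrev : Reversible κ π)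
    {c ε : ℝ} (hc0 : 0 ≤ c) (hε0 : 0 ≤ ε) (hA : MeasurableSet A) (hA' : MeasurableSet A')
    (hB : MeasurableSet B) (hBA : B ⊆ A) (hc : ∀ y ∈ A', c ≤ (κ y Aᶜ).toReal)
    (hε : ∀ x ∈ B, ε ≤ (κ x A).toReal) :
    c * (ε * (π B).toReal - (π (A \ A')).toReal) ≤ flow (kpow κ 2) π A := by
  have hflow := mul_tsub_le_setLIntegral_kpow_two hrev hA hA' hB hBA
    (fun y hy => ENNReal.ofReal_le_of_le_toReal (hc y hy))
    (fun x hx => ENNReal.ofReal_le_of_le_toReal (hε x hx))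
  have hfin : ∫⁻ x in A, kpow κ 2 x Aᶜ ∂π ≠ ∞ :=
    ne_top_of_le_ne_top (measure_ne_top π A) (setLIntegral_kernel_le_measure π A Aᶜ)
  calc c * (ε * (π B).toReal - (π (A \ A')).toReal)
      ≤ c * (ENNReal.ofReal ε * π B - π (A \ A')).toReal := by
        gcongr
        refine le_trans ?_ (ENNReal.le_toReal_sub (measure_ne_top π _))
        rw [ENNReal.toReal_mul, ENNReal.toReal_ofReal hε0]
    _ = (ENNReal.ofReal c * (ENNReal.ofReal ε * π B - π (A \ A'))).toReal := by
        rw [ENNReal.toReal_mul, ENNReal.toReal_ofReal hc0]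
    _ ≤ flow (kpow κ 2) π A := ENNReal.toReal_mono hfin hflow

end TwoStepFlow

end IsoperimetricFlow

theorem k2_lower_bound_case_two_general {Ω : Type*} [MeasurableSpace Ω] (κ : Kernel Ω Ω)
    [IsMarkovKernel κ] (π : Measure Ω) [IsProbabilityMeasure π]
    (hrev : Reversible κ π)
    (A : Set Ω) (hA : MeasurableSet A) (h0 : 0 < π A) (h12 : π A ≤ 1 / 2)
    (δ ε₁ ε₂ : ℝ) (hε₁ : 0 < ε₁) (hε₂ : 0 < ε₂)
    (hC : (π (A \ {y ∈ A | kinfN κ π 1 / 4 ≤ (κ y Aᶜ).toReal})).toReal ≤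
      δ * (π A).toReal)
    (hB : (π {x ∈ {y ∈ A | kinfN κ π 1 / 4 ≤ (κ y Aᶜ).toReal} |
        (κ x Aᶜ).toReal < 1 - ε₁}).toReal ≥
      ε₂ * (π {y ∈ A | kinfN κ π 1 / 4 ≤ (κ y Aᶜ).toReal}).toReal) :
    isoQ (kpow κ 2) π A ≥ kinfN κ π 1 / 4 * (ε₁ * ε₂ * (1 - δ) - δ) := by
  set k := kinfN κ π 1
  set A' : Set Ω := {y ∈ A | k / 4 ≤ (κ y Aᶜ).toReal}
  set B : Set Ω := {x ∈ A' | (κ x Aᶜ).toReal < 1 - ε₁}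
  have hexit : Measurable fun y => (κ y Aᶜ).toReal := (κ.measurable_coe hA.compl).ennreal_toReal
  have hA' : MeasurableSet A' := hA.inter (measurableSet_le measurable_const hexit)
  have hB' : MeasurableSet B := hA'.inter (measurableSet_lt hexit measurable_const)
  have hstay : ∀ x ∈ B, ε₁ ≤ (κ x A).toReal := fun x hx => by
    have := probReal_compl_eq_one_sub (μ := κ x) hA
    simp only [measureReal_def] at this
    linarith [hx.2]
  have hk4 : 0 ≤ k / 4 := div_nonneg (kinfN_nonneg κ π 1) zero_le_four
  have hflow := mul_sub_le_flow_kpow_two hrev hk4 hε₁.le hA hA' hB'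
    (fun x hx => hx.1.1) (fun y hy => hy.2) hstay
  have hsplit : (π A').toReal + (π (A \ A')).toReal = (π A).toReal := by
    have := measureReal_inter_add_sdiff (μ := π) (s := A) hA'
    rwa [Set.inter_eq_self_of_subset_right (Set.sep_subset A _)] at this
  have hA1 : π A < 1 := h12.trans_lt (by rw [one_div]; exact ENNReal.one_half_lt_one)
  refine le_isoQ_of_mul_le_flow hA h0 hA1 (le_trans ?_ hflow)
  rw [mul_assoc]
  gcongr
  have hA'big : (1 - δ) * (π A).toReal ≤ (π A').toReal := by linarith
  linarith [mul_le_mul_of_nonneg_left hA'big (mul_nonneg hε₁.le hε₂.le),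
    mul_le_mul_of_nonneg_left hB hε₁.le]

/-- Second case of the main lemma: if `π(C) ≤ δ π(A)` and
`π(B_{ε₁}) ≥ ε₂ π(A_{k/4})`, then `k₂(A) ≥ (k/4)(ε₁ε₂(1−δ) − δ)`. -/
theorem k2_lower_bound_case_two {Ω : Type*} [MeasurableSpace Ω] (κ : Kernel Ω Ω)
    [IsMarkovKernel κ] (π : Measure Ω) [IsProbabilityMeasure π]
    (hinv : ∀ B : Set Ω, MeasurableSet B → π B = ∫⁻ x, κ x B ∂π)
    (hrev : Reversible κ π)
    (hk : 0 < kinfN κ π 1)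
    (A : Set Ω) (hA : MeasurableSet A) (h0 : 0 < π A) (h12 : π A ≤ 1 / 2)
    (δ ε₁ ε₂ : ℝ) (hδ : 0 < δ) (hε₁ : 0 < ε₁) (hε₂ : 0 < ε₂)
    (hC : (π (A \ {y ∈ A | kinfN κ π 1 / 4 ≤ (κ y Aᶜ).toReal})).toReal ≤
      δ * (π A).toReal)
    (hB : (π {x ∈ {y ∈ A | kinfN κ π 1 / 4 ≤ (κ y Aᶜ).toReal} |
        (κ x Aᶜ).toReal < 1 - ε₁}).toReal ≥
      ε₂ * (π {y ∈ A | kinfN κ π 1 / 4 ≤ (κ y Aᶜ).toReal}).toReal) :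
    isoQ (kpow κ 2) π A ≥ kinfN κ π 1 / 4 * (ε₁ * ε₂ * (1 - δ) - δ) :=
  k2_lower_bound_case_two_general κ π hrev A hA h0 h12 δ ε₁ ε₂ hε₁ hε₂ hC hB
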